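/- For every α > 0, the standardized call function χ_α is strictly increasing on (0, +∞). -/

import Mathlib

/-! The derivative of `χ_α` is `α · φ(α/2 · (x − 1/x))`, with `φ` the standard normal density: the
factor `e^{α²/2}` in front of the second term exactly cancels against its Gaussian density, because
`(x + 1/x)² − (x − 1/x)² = 4`. A positive derivative on the interval `(0, ∞)` gives strict
monotonicity. -/

open Real Set MeasureTheory intervalIntegral

noncomputable def stdNormalCDF (x : ℝ) : ℝ :=
  (Real.sqrt (2 * Real.pi))⁻¹ * ∫ t in Set.Iic x, Real.exp (-t ^ 2 / 2)

noncomputable def chi (α x : ℝ) : ℝ :=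
  stdNormalCDF (α / 2 * (x - 1 / x)) -
    Real.exp (α ^ 2 / 2) * stdNormalCDF (-(α / 2) * (x + 1 / x))

theorem hasDerivAt_integral_Iic {E : Type*} [NormedAddCommGroup E] [NormedSpace ℝ E]
    [CompleteSpace E] {f : ℝ → E} (hf : Integrable f) {x : ℝ} (hx : ContinuousAt f x) :
    HasDerivAt (fun y => ∫ t in Iic y, f t) (f x) x := by
  have hsplit : (fun y => ∫ t in Iic y, f t) = fun y => (∫ t in Iic 0, f t) + ∫ t in 0..y, f t := by
    funext y
    rw [← integral_Iic_sub_Iic hf.integrableOn hf.integrableOn, add_sub_cancel]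
  rw [hsplit]
  exact (integral_hasDerivAt_right hf.intervalIntegrable
    hf.aestronglyMeasurable.stronglyMeasurableAtFilter hx).const_add _

theorem integrable_exp_neg_sq_div_two : Integrable fun t : ℝ => exp (-t ^ 2 / 2) := by
  convert integrable_exp_neg_mul_sq (show (0 : ℝ) < 1 / 2 by norm_num) using 2 with t
  ring_nf

theorem hasDerivAt_stdNormalCDF (x : ℝ) :
    HasDerivAt stdNormalCDF ((√(2 * π))⁻¹ * exp (-x ^ 2 / 2)) x :=
  (hasDerivAt_integral_Iic integrable_exp_neg_sq_div_two (by fun_prop)).const_mul _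

theorem hasDerivAt_sub_one_div {x : ℝ} (hx : x ≠ 0) :
    HasDerivAt (fun y : ℝ => y - 1 / y) (1 + 1 / x ^ 2) x := by
  simpa [one_div, Pi.sub_def] using (hasDerivAt_id' x).sub (hasDerivAt_inv hx)

theorem hasDerivAt_add_one_div {x : ℝ} (hx : x ≠ 0) :
    HasDerivAt (fun y : ℝ => y + 1 / y) (1 - 1 / x ^ 2) x := by
  simpa [one_div, sub_eq_add_neg, Pi.add_def] using (hasDerivAt_id' x).add (hasDerivAt_inv hx)

theorem exp_sq_div_two_mul_exp_neg_sq_add_one_div (α : ℝ) {x : ℝ} (hx : x ≠ 0) :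
    exp (α ^ 2 / 2) * exp (-(-(α / 2) * (x + 1 / x)) ^ 2 / 2) =
      exp (-(α / 2 * (x - 1 / x)) ^ 2 / 2) := by
  rw [← exp_add]
  congr 1
  field_simp
  ring

theorem hasDerivAt_chi (α : ℝ) {x : ℝ} (hx : x ≠ 0) :
    HasDerivAt (chi α) (α * ((√(2 * π))⁻¹ * exp (-(α / 2 * (x - 1 / x)) ^ 2 / 2))) x := by
  have hfirst := (hasDerivAt_stdNormalCDF _).comp x ((hasDerivAt_sub_one_div hx).const_mul (α / 2))
  have hsecond := ((hasDerivAt_stdNormalCDF _).comp x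
    ((hasDerivAt_add_one_div hx).const_mul (-(α / 2)))).const_mul (exp (α ^ 2 / 2))
  refine (hfirst.sub hsecond).congr_deriv ?_
  have hcancel := exp_sq_div_two_mul_exp_neg_sq_add_one_div α hx
  have hsum : α / 2 * (1 + 1 / x ^ 2) - -(α / 2) * (1 - 1 / x ^ 2) = α := by ring
  calc _ = (√(2 * π))⁻¹ * exp (-(α / 2 * (x - 1 / x)) ^ 2 / 2) *
          (α / 2 * (1 + 1 / x ^ 2) - -(α / 2) * (1 - 1 / x ^ 2)) := by rw [← hcancel]; ring
    _ = _ := by rw [hsum]; ring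

theorem chi_strictMonoOn (α : ℝ) (hα : 0 < α) :
    StrictMonoOn (chi α) (Set.Ioi 0) := by
  apply strictMonoOn_of_deriv_pos (convex_Ioi 0)
  · exact fun x hx => (hasDerivAt_chi α (ne_of_gt hx)).continuousAt.continuousWithinAt
  · intro x hx
    rw [interior_Ioi] at hx
    rw [(hasDerivAt_chi α (ne_of_gt hx)).deriv]
    positivity
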